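/- arXiv:1206.0455 — 2 statements merged into one kernel-verified Lean document; each statement's English description precedes it below -/
import Mathlib

section
/- The kernel of the F-linear map ψ ↦ ψ_{s,t} on F[λ,λ⁻¹] is exactly Fλ^s + Fλ^t. -/
open LaurentPolynomial

noncomputable section

/-- The Laurent polynomial `ψ(c·λ)`. -/
noncomputable def lscale {F : Type*} [Field F] (c : F) (ψ : LaurentPolynomial F) :
    LaurentPolynomial F :=
  Finsupp.sum ψ.coeff fun i a => (a * c ^ i) • (T i : LaurentPolynomial F)

/-- The map `ψ ↦ ψ_{s,t}` of Definition 2.4: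
`ψ_{s,t}(λ) = ψ(q⁻¹λ) − (q^{−2s}+q^{−2t})ψ(qλ) + q^{−2s−2t}ψ(q³λ)`. -/
noncomputable def adu {F : Type*} [Field F] (q : F) (s t : ℤ) (ψ : LaurentPolynomial F) :
    LaurentPolynomial F :=
  lscale q⁻¹ ψ - (q ^ (-2*s) + q ^ (-2*t)) • lscale q ψ + q ^ (-2*s-2*t) • lscale (q^3) ψ

/-- `F[λ,λ⁻¹]_{s,t}`: the span of the monomials `λ^i`, `i ∉ {s,t}`. -/
noncomputable def lstSpan (F : Type*) [Field F] (s t : ℤ) :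
    Submodule F (LaurentPolynomial F) :=
  Submodule.span F {ψ : LaurentPolynomial F | ∃ i : ℤ, i ≠ s ∧ i ≠ t ∧ ψ = T i}

/-- `x^i` for `i : ℤ`, interpreting negative powers via a designated inverse `y`. -/
def zpow2 {B : Type*} [Monoid B] (x y : B) (i : ℤ) : B :=
  if 0 ≤ i then x ^ i.toNat else y ^ (-i).toNat

/-- Evaluation `ψ(c·x)` of a Laurent polynomial `ψ`, where `y` plays the role of `x⁻¹`. -/
noncomputable def leval {F : Type*} [Field F] {B : Type*} [Ring B] [Algebra F B]
    (ψ : LaurentPolynomial F) (c : F) (x y : B) : B :=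
  Finsupp.sum ψ.coeff fun i a => (a * c ^ i) • zpow2 x y i

/-!
Each `lscale c` multiplies the coefficient of `λⁿ` by `cⁿ`, so `adu q s t` is diagonal in the
monomial basis: it scales `λⁿ` by `q⁻ⁿ (1 - q^{2(n-s)}) (1 - q^{2(n-t)})`. Since `q` is not a root
of unity, this eigenvalue vanishes exactly for `n = s` and `n = t`, so the kernel consists of the
Laurent polynomials supported on `{s, t}`.
-/

theorem zpow_eq_one_iff_of_pow_ne_one {G₀ : Type*} [GroupWithZero G₀] {q : G₀}
    (hq : ∀ n : ℕ, 0 < n → q ^ n ≠ 1) {k : ℤ} : q ^ k = 1 ↔ k = 0 := by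
  obtain ⟨n, rfl | rfl⟩ := Int.eq_nat_or_neg k <;>
  · rcases n.eq_zero_or_pos with rfl | hn
    · simp
    · simp [hq n hn, hn.ne']

theorem span_T_pair_eq_supported {R : Type*} [Semiring R] (s t : ℤ) :
    Submodule.span R {(T s : LaurentPolynomial R), T t} = AddMonoidAlgebra.supported R R {s, t} := by
  rw [AddMonoidAlgebra.supported_eq_span_single, Set.image_pair]
  rfl

theorem coeff_lscale {F : Type*} [Field F] (c : F) (ψ : LaurentPolynomial F) (n : ℤ) :
    (lscale c ψ).coeff n = ψ.coeff n * c ^ n := by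
  simp +contextual [lscale, Finsupp.sum]

theorem coeff_adu {F : Type*} [Field F] {q : F} (hq0 : q ≠ 0) (s t : ℤ)
    (ψ : LaurentPolynomial F) (n : ℤ) :
    (adu q s t ψ).coeff n =
      q ^ (-n) * (1 - q ^ (2 * (n - s))) * (1 - q ^ (2 * (n - t))) * ψ.coeff n := by
  simp only [adu, AddMonoidAlgebra.coeff_add, AddMonoidAlgebra.coeff_sub,
    AddMonoidAlgebra.coeff_smul, Finsupp.add_apply, Finsupp.sub_apply, Finsupp.smul_apply,
    coeff_lscale, smul_eq_mul]
  rw [← zpow_natCast q 3, ← zpow_mul, Nat.cast_ofNat]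
  simp only [inv_zpow', neg_mul, zpow_neg, zpow_sub₀ hq0, mul_comm (2 : ℤ), mul_comm (3 : ℤ),
    zpow_mul, zpow_ofNat]
  field_simp
  ring

theorem adu_eigenvalue_eq_zero_iff {F : Type*} [Field F] {q : F} (hq0 : q ≠ 0)
    (hq : ∀ n : ℕ, 0 < n → q ^ n ≠ 1) (s t n : ℤ) :
    q ^ (-n) * (1 - q ^ (2 * (n - s))) * (1 - q ^ (2 * (n - t))) = 0 ↔ n = s ∨ n = t := by
  simp only [mul_eq_zero, zpow_ne_zero _ hq0, false_or, sub_eq_zero, eq_comm (a := (1 : F)),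
    zpow_eq_one_iff_of_pow_ne_one hq]
  omega

theorem adu_eq_zero_iff {F : Type*} [Field F] {q : F} (hq0 : q ≠ 0)
    (hq : ∀ n : ℕ, 0 < n → q ^ n ≠ 1) (s t : ℤ) (ψ : LaurentPolynomial F) :
    adu q s t ψ = 0 ↔ ψ ∈ AddMonoidAlgebra.supported F F {s, t} := by
  simp only [LaurentPolynomial.ext_iff, AddMonoidAlgebra.mem_supported', coeff_adu hq0,
    AddMonoidAlgebra.coeff_zero, Finsupp.coe_zero, Pi.zero_apply, mul_eq_zero,
    adu_eigenvalue_eq_zero_iff hq0 hq, Set.mem_insert_iff, Set.mem_singleton_iff]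
  exact forall_congr' fun n => by tauto

theorem stmt4_general {F : Type*} [Field F] (q : F) (hq0 : q ≠ 0)
    (hq : ∀ n : ℕ, 0 < n → q ^ n ≠ 1) (s t : ℤ) :
    {ψ : LaurentPolynomial F | adu q s t ψ = 0}
      = (Submodule.span F {(T s : LaurentPolynomial F), T t} : Set (LaurentPolynomial F)) := by
  rw [span_T_pair_eq_supported]
  ext ψ
  exact adu_eq_zero_iff hq0 hq s t ψ

theorem stmt4 {F : Type*} [Field F] (q : F) (hq0 : q ≠ 0)
    (hq : ∀ n : ℕ, 0 < n → q ^ n ≠ 1) (s t : ℤ) (hst : s ≠ t) :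
    {ψ : LaurentPolynomial F | adu q s t ψ = 0}
      = (Submodule.span F {(T s : LaurentPolynomial F), T t} : Set (LaurentPolynomial F)) :=
  stmt4_general q hq0 hq s t
end
end

section
/- The image of the F-linear map ψ ↦ ψ_{s,t} on F[λ,λ⁻¹] is exactly the subspace F[λ,λ⁻¹]_{s,t} = Span{λ^i : i ≠ s, i ≠ t}. -/
open LaurentPolynomial

noncomputable section

/-! On the monomial basis the map is diagonal: `λ^n` is sent to
`q^{-n} (1 - q^{2(n-s)}) (1 - q^{2(n-t)}) λ^n`. As `q` is not a root of unity this eigenvalue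
vanishes exactly for `n ∈ {s, t}`, and the image of a diagonal map is spanned by the basis vectors
with nonzero eigenvalue. -/

theorem Module.Basis.range_eq_span_of_apply_eq_smul {ι K M : Type*} [DivisionRing K]
    [AddCommGroup M] [Module K M] (b : Module.Basis ι K M) (f : M →ₗ[K] M) (c : ι → K)
    (hf : ∀ i, f (b i) = c i • b i) :
    LinearMap.range f = Submodule.span K (b '' {i | c i ≠ 0}) := by
  rw [LinearMap.range_eq_map, ← b.span_eq, Submodule.map_span, ← Set.range_comp]
  apply le_antisymm
  · rw [Submodule.span_le]
    rintro _ ⟨i, rfl⟩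
    rw [SetLike.mem_coe, Function.comp_apply, hf]
    by_cases hi : c i = 0
    · rw [hi, zero_smul]
      exact zero_mem _
    · exact Submodule.smul_mem _ _ (Submodule.subset_span ⟨i, hi, rfl⟩)
  · rw [Submodule.span_le]
    rintro _ ⟨i, hi, rfl⟩
    have hbi : b i = (c i)⁻¹ • f (b i) := by rw [hf, inv_smul_smul₀ hi]
    rw [SetLike.mem_coe, hbi]
    exact Submodule.smul_mem _ _ (Submodule.subset_span ⟨i, rfl⟩)

theorem zpow_eq_one_iff_of_not_isOfFinOrder {G : Type*} [DivisionMonoid G] {x : G}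
    (hx : ¬IsOfFinOrder x) {m : ℤ} : x ^ m = 1 ↔ m = 0 :=
  ⟨fun h => by_contra fun hm => hx (isOfFinOrder_iff_zpow_eq_one.2 ⟨m, hm, h⟩),
    fun h => h ▸ zpow_zero x⟩

section

variable {F : Type*} [Field F]

def lscaleL (c : F) : LaurentPolynomial F →ₗ[F] LaurentPolynomial F :=
  (AddMonoidAlgebra.basis ℤ F).constr F fun i => c ^ i • T i

theorem lscaleL_apply (c : F) (ψ : LaurentPolynomial F) : lscaleL c ψ = lscale c ψ := by
  simp only [lscaleL, Module.Basis.constr_apply, lscale, smul_smul]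
  rfl

theorem lscale_T (c : F) (n : ℤ) : lscale c (T n : LaurentPolynomial F) = c ^ n • T n := by
  rw [← lscaleL_apply, lscaleL]
  exact (AddMonoidAlgebra.basis ℤ F).constr_basis F _ n

def aduL (q : F) (s t : ℤ) : LaurentPolynomial F →ₗ[F] LaurentPolynomial F :=
  lscaleL q⁻¹ - (q ^ (-2*s) + q ^ (-2*t)) • lscaleL q + q ^ (-2*s-2*t) • lscaleL (q^3)

theorem coe_aduL (q : F) (s t : ℤ) : ⇑(aduL q s t) = adu q s t := by
  ext1 ψ
  simp [aduL, adu, lscaleL_apply]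

def aduEigenvalue (q : F) (s t n : ℤ) : F :=
  q⁻¹ ^ n - (q ^ (-2*s) + q ^ (-2*t)) * q ^ n + q ^ (-2*s-2*t) * (q^3) ^ n

theorem adu_T (q : F) (s t n : ℤ) :
    adu q s t (T n : LaurentPolynomial F) = aduEigenvalue q s t n • T n := by
  rw [adu, lscale_T, lscale_T, lscale_T, aduEigenvalue, smul_smul, smul_smul]
  module

theorem aduEigenvalue_eq_mul {q : F} (hq0 : q ≠ 0) (s t n : ℤ) :
    aduEigenvalue q s t n = q ^ (-n) * ((1 - q ^ (2*(n-s))) * (1 - q ^ (2*(n-t)))) := by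
  rw [aduEigenvalue, inv_zpow, ← zpow_neg]
  simp only [mul_sub, sub_mul, one_mul, mul_one, ← zpow_natCast, ← zpow_mul, ← zpow_add₀ hq0]
  ring_nf
  simp only [← zpow_add₀ hq0]
  ring_nf

theorem aduEigenvalue_eq_zero_iff {q : F} (hq0 : q ≠ 0) (hq : ¬IsOfFinOrder q) (s t n : ℤ) :
    aduEigenvalue q s t n = 0 ↔ n = s ∨ n = t := by
  simp only [aduEigenvalue_eq_mul hq0, mul_eq_zero, zpow_ne_zero _ hq0, false_or, sub_eq_zero,
    eq_comm (a := (1 : F)), zpow_eq_one_iff_of_not_isOfFinOrder hq]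
  omega

end

theorem stmt5_general {F : Type*} [Field F] (q : F) (hq0 : q ≠ 0)
    (hq : ∀ n : ℕ, 0 < n → q ^ n ≠ 1) (s t : ℤ) :
    Set.range (adu q s t) = (lstSpan F s t : Set (LaurentPolynomial F)) := by
  have hq_order : ¬IsOfFinOrder q := by
    simpa [isOfFinOrder_iff_pow_eq_one] using hq
  have hrange := (AddMonoidAlgebra.basis ℤ F).range_eq_span_of_apply_eq_smul (aduL q s t)
    (aduEigenvalue q s t) fun n => by rw [coe_aduL]; exact adu_T q s t n
  rw [← coe_aduL, ← LinearMap.coe_range, hrange, lstSpan]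
  congr 3
  ext ψ
  simp [aduEigenvalue_eq_zero_iff hq0 hq_order, eq_comm (a := ψ), and_assoc]

theorem stmt5 {F : Type*} [Field F] (q : F) (hq0 : q ≠ 0)
    (hq : ∀ n : ℕ, 0 < n → q ^ n ≠ 1) (s t : ℤ) (hst : s ≠ t) :
    Set.range (adu q s t) = (lstSpan F s t : Set (LaurentPolynomial F)) :=
  stmt5_general q hq0 hq s t

end
end
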